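/- Let μ be a probability measure on ℝ^d, λ > 0, and h* ∈ H¹(μ). Suppose h^λ minimizes J^λ(h) = ‖h − h*‖²_{L²(μ)} + λ‖∇h‖²_{L²(μ)} over H¹(μ), and suppose there exists g ∈ L²(μ) with −⟨∇h*, ∇v⟩_{L²(μ)} = ⟨g, v⟩_{L²(μ)} for all v ∈ H¹(μ). Then ‖h^λ − h*‖²_{L²(μ)} ≤ λ²‖g‖²_{L²(μ)} and ‖∇h^λ − ∇h*‖²_{L²(μ)} ≤ λ‖g‖²_{L²(μ)}. -/

import Mathlib

/-!
Perturbing the minimizer `h^λ` of `J^λ` along `t • v` gives a quadratic in `t` that is minimal at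
`t = 0`, so its linear coefficient vanishes: this is the Euler–Lagrange equation
`⟨h^λ - h*, v⟩ + λ⟨∇h^λ, ∇v⟩ = 0`. Taking `v = e := h^λ - h*` and using the weak Laplacian `g`
for the term `⟨∇h*, ∇e⟩` gives the identity `‖e‖² + λ‖∇e‖² = λ⟨g, e⟩`. By Cauchy–Schwarz,
`‖e‖² ≤ λ‖g‖‖e‖`, hence `‖e‖ ≤ λ‖g‖`, and then `λ‖∇e‖² ≤ λ⟨g, e⟩ ≤ λ²‖g‖²`.
-/

open MeasureTheory RealInnerProductSpace
open scoped Gradient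

namespace MeasureTheory
variable {α E : Type*} [MeasurableSpace α] {μ : Measure α} [NormedAddCommGroup E]

theorem MemLp.integrable_norm_sq {f : α → E} (hf : MemLp f 2 μ) :
    Integrable (fun x => ‖f x‖ ^ 2) μ :=
  (memLp_two_iff_integrable_sq_norm hf.1).1 hf

variable [InnerProductSpace ℝ E] {f g : α → E}

theorem MemLp.integrable_inner (hf : MemLp f 2 μ) (hg : MemLp g 2 μ) :
    Integrable (fun x => ⟪f x, g x⟫) μ :=
  (L2.integrable_inner (𝕜 := ℝ) (hf.toLp f) (hg.toLp g)).congr <| by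
    filter_upwards [hf.coeFn_toLp, hg.coeFn_toLp] with x hfx hgx
    rw [hfx, hgx]

theorem integral_norm_add_smul_sq (hf : MemLp f 2 μ) (hg : MemLp g 2 μ) (t : ℝ) :
    ∫ x, ‖f x + t • g x‖ ^ 2 ∂μ
      = ∫ x, ‖f x‖ ^ 2 ∂μ + 2 * t * ∫ x, ⟪f x, g x⟫ ∂μ + t ^ 2 * ∫ x, ‖g x‖ ^ 2 ∂μ := by
  have hpt : ∀ x, ‖f x + t • g x‖ ^ 2
      = ‖f x‖ ^ 2 + 2 * t * ⟪f x, g x⟫ + t ^ 2 * ‖g x‖ ^ 2 := fun x => by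
    rw [norm_add_sq_real, real_inner_smul_right, norm_smul, mul_pow, Real.norm_eq_abs, sq_abs]
    ring
  have hfg := (hf.integrable_inner hg).const_mul (2 * t)
  simp only [hpt]
  rw [integral_add ?_ (hg.integrable_norm_sq.const_mul _), integral_add hf.integrable_norm_sq hfg,
    integral_const_mul, integral_const_mul]
  exact hf.integrable_norm_sq.add hfg

theorem integral_add_mul_sq {f g : α → ℝ} (hf : MemLp f 2 μ) (hg : MemLp g 2 μ) (t : ℝ) :
    ∫ x, (f x + t * g x) ^ 2 ∂μ
      = ∫ x, f x ^ 2 ∂μ + 2 * t * ∫ x, f x * g x ∂μ + t ^ 2 * ∫ x, g x ^ 2 ∂μ := by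
  simpa [sq_abs, mul_comm (g _)] using integral_norm_add_smul_sq hf hg t

theorem sq_integral_mul_le {f g : α → ℝ} (hf : MemLp f 2 μ) (hg : MemLp g 2 μ) :
    (∫ x, f x * g x ∂μ) ^ 2 ≤ (∫ x, f x ^ 2 ∂μ) * ∫ x, g x ^ 2 ∂μ := by
  have h := discrim_le_zero fun t : ℝ => show 0 ≤ (∫ x, g x ^ 2 ∂μ) * (t * t)
      + 2 * (∫ x, f x * g x ∂μ) * t + ∫ x, f x ^ 2 ∂μ by
    have := integral_add_mul_sq hf hg t ▸ integral_nonneg fun x => sq_nonneg (f x + t * g x)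
    linarith
  rw [discrim] at h
  linarith

end MeasureTheory

section Gradient
variable {F : Type*} [NormedAddCommGroup F] [InnerProductSpace ℝ F] [CompleteSpace F]
  {f g : F → ℝ} {x : F}

theorem gradient_add (hf : DifferentiableAt ℝ f x) (hg : DifferentiableAt ℝ g x) :
    ∇ (f + g) x = ∇ f x + ∇ g x := by
  simp only [gradient, fderiv_add hf hg, map_add]

theorem gradient_sub (hf : DifferentiableAt ℝ f x) (hg : DifferentiableAt ℝ g x) :
    ∇ (f - g) x = ∇ f x - ∇ g x := by
  simp only [gradient, fderiv_sub hf hg, map_sub]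

theorem gradient_const_smul (c : ℝ) (hf : DifferentiableAt ℝ f x) :
    ∇ (c • f) x = c • ∇ f x := by
  simp only [gradient, fderiv_const_smul hf c, map_smul]

end Gradient

theorem linear_coeff_eq_zero_of_forall_nonneg {a b : ℝ} (h : ∀ t, 0 ≤ a * (t * t) + b * t) :
    b = 0 := by
  have := discrim_le_zero (K := ℝ) (c := 0) (by simpa using h)
  rw [discrim] at this
  nlinarith [sq_nonneg b]

theorem le_sq_mul_and_le_mul_of_add_mul_eq_mul {lam E D G I : ℝ} (hlam : 0 < lam) (hE : 0 ≤ E)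
    (hD : 0 ≤ D) (hG : 0 ≤ G) (hEDI : E + lam * D = lam * I) (hI : I ^ 2 ≤ G * E) :
    E ≤ lam ^ 2 * G ∧ D ≤ lam * G := by
  have hEI : E ≤ lam * I := by nlinarith
  have hE_le : E ≤ lam ^ 2 * G := by
    rcases hE.eq_or_lt with hE0 | hEpos
    · rw [← hE0]; positivity
    · nlinarith [mul_le_mul_of_nonneg_left hI (sq_nonneg lam), mul_self_le_mul_self hE hEI]
  have hDI : D ≤ I := by nlinarith
  refine ⟨hE_le, hDI.trans ?_⟩
  nlinarith [mul_le_mul_of_nonneg_left hE_le hG, mul_nonneg hlam.le hG]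

section Regularization
variable {F : Type*} [NormedAddCommGroup F] [InnerProductSpace ℝ F] [CompleteSpace F]
  [MeasurableSpace F] (μ : Measure F)

-- The space `H¹(μ)` (with classical gradients) and the functional `J^λ` of the paper.
def MemH1 (h : F → ℝ) : Prop :=
  Differentiable ℝ h ∧ MemLp h 2 μ ∧ MemLp (∇ h) 2 μ

noncomputable def regularizedEnergy (lam : ℝ) (hstar h : F → ℝ) : ℝ :=
  ∫ x, (h x - hstar x) ^ 2 ∂μ + lam * ∫ x, ‖∇ h x‖ ^ 2 ∂μ

variable {μ}

namespace MemH1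
variable {f g : F → ℝ}

theorem sub (hf : MemH1 μ f) (hg : MemH1 μ g) : MemH1 μ (f - g) := by
  refine ⟨hf.1.sub hg.1, hf.2.1.sub hg.2.1, ?_⟩
  have hgrad : ∇ (f - g) = ∇ f - ∇ g := funext fun x => gradient_sub (hf.1 x) (hg.1 x)
  rw [hgrad]
  exact hf.2.2.sub hg.2.2

theorem add_const_smul (hf : MemH1 μ f) (hg : MemH1 μ g) (c : ℝ) : MemH1 μ (f + c • g) := by
  refine ⟨hf.1.add (hg.1.const_smul c), hf.2.1.add (hg.2.1.const_smul c), ?_⟩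
  have hgrad : ∇ (f + c • g) = ∇ f + c • ∇ g := funext fun x => by
    rw [gradient_add (hf.1 x) ((hg.1 x).const_smul c), gradient_const_smul c (hg.1 x)]; rfl
  rw [hgrad]
  exact hf.2.2.add (hg.2.2.const_smul c)

end MemH1

theorem IsMinOn.regularizedEnergy_euler_lagrange {lam : ℝ} {hstar hmin v : F → ℝ}
    (hmin_min : IsMinOn (regularizedEnergy μ lam hstar) {h | MemH1 μ h} hmin)
    (hstar_L2 : MemLp hstar 2 μ) (hmin_H1 : MemH1 μ hmin) (hv : MemH1 μ v) :
    ∫ x, (hmin x - hstar x) * v x ∂μ + lam * ∫ x, ⟪∇ hmin x, ∇ v x⟫ ∂μ = 0 := by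
  set B := ∫ x, (hmin x - hstar x) * v x ∂μ + lam * ∫ x, ⟪∇ hmin x, ∇ v x⟫ ∂μ
  set A := ∫ x, v x ^ 2 ∂μ + lam * ∫ x, ‖∇ v x‖ ^ 2 ∂μ
  have hgap_L2 : MemLp (fun x => hmin x - hstar x) 2 μ := hmin_H1.2.1.sub hstar_L2
  have hexpand : ∀ t : ℝ, regularizedEnergy μ lam hstar (hmin + t • v)
      = regularizedEnergy μ lam hstar hmin + 2 * t * B + t ^ 2 * A := fun t => by
    have hgrad : ∀ x, ∇ (hmin + t • v) x = ∇ hmin x + t • ∇ v x := fun x => by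
      rw [gradient_add (hmin_H1.1 x) ((hv.1 x).const_smul t), gradient_const_smul t (hv.1 x)]
    have hval : ∀ x, (hmin + t • v) x - hstar x = hmin x - hstar x + t * v x := fun x => by
      simp only [Pi.add_apply, Pi.smul_apply, smul_eq_mul]; ring
    simp only [regularizedEnergy, hgrad, hval]
    rw [integral_add_mul_sq hgap_L2 hv.2.1, integral_norm_add_smul_sq hmin_H1.2.2 hv.2.2]
    ring
  have h2B := linear_coeff_eq_zero_of_forall_nonneg (a := A) (b := 2 * B) fun t => by
    have := hexpand t ▸ isMinOn_iff.1 hmin_min _ (hmin_H1.add_const_smul hv t)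
    linarith
  linarith

theorem IsMinOn.regularizedEnergy_gap_identity {lam : ℝ} {hstar hmin g : F → ℝ}
    (hmin_min : IsMinOn (regularizedEnergy μ lam hstar) {h | MemH1 μ h} hmin)
    (hstar_H1 : MemH1 μ hstar) (hmin_H1 : MemH1 μ hmin)
    (hweak : ∀ v, MemH1 μ v → -∫ x, ⟪∇ hstar x, ∇ v x⟫ ∂μ = ∫ x, g x * v x ∂μ) :
    ∫ x, (hmin x - hstar x) ^ 2 ∂μ + lam * ∫ x, ‖∇ hmin x - ∇ hstar x‖ ^ 2 ∂μ
      = lam * ∫ x, g x * (hmin x - hstar x) ∂μ := by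
  have hgap_H1 := hmin_H1.sub hstar_H1
  have hgrad : ∀ x, ∇ (hmin - hstar) x = ∇ hmin x - ∇ hstar x := fun x =>
    gradient_sub (hmin_H1.1 x) (hstar_H1.1 x)
  have hEL := hmin_min.regularizedEnergy_euler_lagrange hstar_H1.2.1 hmin_H1 hgap_H1
  have hW := hweak _ hgap_H1
  simp only [hgrad, Pi.sub_apply, ← sq] at hEL hW
  have hgrad_gap_L2 : MemLp (fun x => ∇ hmin x - ∇ hstar x) 2 μ := hmin_H1.2.2.sub hstar_H1.2.2
  have hsplit : ∫ x, ⟪∇ hmin x, ∇ hmin x - ∇ hstar x⟫ ∂μ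
      = ∫ x, ‖∇ hmin x - ∇ hstar x‖ ^ 2 ∂μ + ∫ x, ⟪∇ hstar x, ∇ hmin x - ∇ hstar x⟫ ∂μ := by
    rw [← integral_add hgrad_gap_L2.integrable_norm_sq
      (hstar_H1.2.2.integrable_inner hgrad_gap_L2)]
    congr with x
    rw [← real_inner_self_eq_norm_sq, ← inner_add_left, sub_add_cancel]
  rw [hsplit] at hEL
  linear_combination hEL + lam * hW

end Regularization

theorem regularization_gap
    {d : ℕ} (μ : Measure (EuclideanSpace ℝ (Fin d)))
    (lam : ℝ) (hlam : 0 < lam)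
    (hstar hmin : EuclideanSpace ℝ (Fin d) → ℝ)
    (hstar_diff : Differentiable ℝ hstar)
    (hstar_L2 : MemLp hstar 2 μ) (hstar_grad_L2 : MemLp (fun x => gradient hstar x) 2 μ)
    (hmin_diff : Differentiable ℝ hmin)
    (hmin_L2 : MemLp hmin 2 μ) (hmin_grad_L2 : MemLp (fun x => gradient hmin x) 2 μ)
    -- `h^λ` minimizes `J^λ` over `H¹(μ)`
    (hopt : ∀ h : EuclideanSpace ℝ (Fin d) → ℝ, Differentiable ℝ h →
      MemLp h 2 μ → MemLp (fun x => gradient h x) 2 μ →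
      ∫ x, (hmin x - hstar x) ^ 2 ∂μ + lam * ∫ x, ‖gradient hmin x‖ ^ 2 ∂μ
        ≤ ∫ x, (h x - hstar x) ^ 2 ∂μ + lam * ∫ x, ‖gradient h x‖ ^ 2 ∂μ)
    -- weak weighted Laplacian of `h*`
    (g : EuclideanSpace ℝ (Fin d) → ℝ) (hg_L2 : MemLp g 2 μ)
    (hweak : ∀ v : EuclideanSpace ℝ (Fin d) → ℝ, Differentiable ℝ v →
      MemLp v 2 μ → MemLp (fun x => gradient v x) 2 μ →
      -∫ x, ⟪gradient hstar x, gradient v x⟫ ∂μ = ∫ x, g x * v x ∂μ) :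
    (∫ x, (hmin x - hstar x) ^ 2 ∂μ ≤ lam ^ 2 * ∫ x, (g x) ^ 2 ∂μ)
    ∧ ∫ x, ‖gradient hmin x - gradient hstar x‖ ^ 2 ∂μ ≤ lam * ∫ x, (g x) ^ 2 ∂μ := by
  have hstar_H1 : MemH1 μ hstar := ⟨hstar_diff, hstar_L2, hstar_grad_L2⟩
  have hmin_H1 : MemH1 μ hmin := ⟨hmin_diff, hmin_L2, hmin_grad_L2⟩
  have hmin_min : IsMinOn (regularizedEnergy μ lam hstar) {h | MemH1 μ h} hmin :=
    isMinOn_iff.2 fun h hh => hopt h hh.1 hh.2.1 hh.2.2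
  have hidentity := hmin_min.regularizedEnergy_gap_identity hstar_H1 hmin_H1
    fun v hv => hweak v hv.1 hv.2.1 hv.2.2
  exact le_sq_mul_and_le_mul_of_add_mul_eq_mul hlam (integral_nonneg fun _ => sq_nonneg _)
    (integral_nonneg fun _ => sq_nonneg _) (integral_nonneg fun _ => sq_nonneg _) hidentity
    (sq_integral_mul_le hg_L2 (hmin_L2.sub hstar_L2))
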